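/- arXiv:1804.08808 — 2 statements merged into one kernel-verified Lean document; each statement's English description precedes it below -/
import Mathlib

section
/- Let G be an (r,s)-directed hypergraph. The adjacency tensor A(G) is weakly irreducible if and only if G is anadiplosis connected. -/
/-- A directed hypergraph on a vertex type `V`, with `N` arcs, each arc having a
tail of size `r` and a head of size `s`, disjoint from each other. -/
structure DirHG (V : Type) (N r s : ℕ) where
  tail : Fin N → Finset V
  head : Fin N → Finset V
  disj : ∀ e, Disjoint (tail e) (head e)
  tail_card : ∀ e, (tail e).card = r
  head_card : ∀ e, (head e).card = s

namespace DirHG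

variable {V : Type} {N r s : ℕ}

/-- The `b`-side of an arc: its tail if `b = true`, its head if `b = false`. -/
def side (G : DirHG V N r s) (b : Bool) (e : Fin N) : Finset V :=
  if b then G.tail e else G.head e

/-- `AnaWalk G u bu w bw L` means: the list of arcs `L` is an anadiplosis walk from
`u` (lying in the `bu`-side of the first arc) to `w` (lying in the `bw`-side of the
last arc), where every intermediate vertex lies in the same side (tail or head) of
the two consecutive arcs it joins. -/
inductive AnaWalk (G : DirHG V N r s) : V → Bool → V → Bool → List (Fin N) → Prop
  | single (e : Fin N) (u w : V) (bu bw : Bool)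
      (hu : u ∈ G.side bu e) (hw : w ∈ G.side bw e) : AnaWalk G u bu w bw [e]
  | cons (e : Fin N) (u v w : V) (bu b bw : Bool) (L : List (Fin N))
      (hu : u ∈ G.side bu e) (hv : v ∈ G.side b e)
      (hL : AnaWalk G v b w bw L) : AnaWalk G u bu w bw (e :: L)

/-- `G` is anadiplosis connected: any two distinct vertices of `T(G) ∪ H(G)` are
joined by an anadiplosis walk, and every vertex of `T(G) ∩ H(G)` lies on an
anadiplosis semi-cycle (a closed anadiplosis walk with at least two pairwise
distinct arcs, starting in a tail and ending in a head or vice versa). -/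
def AnaConnected (G : DirHG V N r s) : Prop :=
  (∀ u v : V, u ≠ v →
      (∃ e, u ∈ G.tail e ∨ u ∈ G.head e) → (∃ e, v ∈ G.tail e ∨ v ∈ G.head e) →
      ∃ bu bv L, AnaWalk G u bu v bv L) ∧
  (∀ u : V, (∃ e, u ∈ G.tail e) → (∃ f, u ∈ G.head f) →
      ∃ L : List (Fin N), L.Nodup ∧ 2 ≤ L.length ∧
        (AnaWalk G u true u false L ∨ AnaWalk G u false u true L))

/-- Membership of a vertex of the bipartite split (a tail-copy `Sum.inl u` or a
head-copy `Sum.inr v`) in an arc. -/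
def splitMem (G : DirHG V N r s) : V ⊕ V → Fin N → Prop
  | Sum.inl u, e => u ∈ G.tail e
  | Sum.inr v, e => v ∈ G.head e

/-- Adjacency in the underlying hypergraph of the bipartite split `B(G)`:
two vertices are adjacent when some arc contains both. -/
def splitAdj (G : DirHG V N r s) (a b : V ⊕ V) : Prop :=
  ∃ e, G.splitMem a e ∧ G.splitMem b e

/-- Connectedness of the underlying hypergraph of the bipartite split `B(G)`:
any two of its vertices are joined by a walk. -/
def SplitConnected (G : DirHG V N r s) : Prop :=
  ∀ a b, (∃ e, G.splitMem a e) → (∃ e, G.splitMem b e) →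
    Relation.ReflTransGen G.splitAdj a b

end DirHG

namespace DirHG

/-- Adjacency in the bipartite graph `G(A)` associated with the adjacency tensor:
a tail-index `i` and a head-index `j` are adjacent iff some arc `e` has
`i ∈ T(e)` and `j ∈ H(e)` (i.e. some entry of the tensor containing both
indices is positive). -/
def tensorAdj (G : DirHG V N r s) (a b : V ⊕ V) : Prop :=
  ∃ e, ∃ i ∈ G.tail e, ∃ j ∈ G.head e,
    ((a = Sum.inl i ∧ b = Sum.inr j) ∨ (a = Sum.inr j ∧ b = Sum.inl i))

/-- The adjacency tensor of `G` is weakly irreducible iff its associated bipartite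
graph `G(A)` is connected. -/
def WeaklyIrreducible (G : DirHG V N r s) : Prop :=
  ∀ a b, (∃ e, G.splitMem a e) → (∃ e, G.splitMem b e) →
    Relation.ReflTransGen G.tensorAdj a b

end DirHG

/-!
Split every vertex `u` into a tail copy `inl u` and a head copy `inr u`. As soon as tails and
heads are nonempty, two split vertices lying in a common arc are joined in `G(A)` through any
tail or head vertex of that arc, so `G(A)` and the split hypergraph `B(G)` have the same
connected components. A walk in `B(G)` is exactly an anadiplosis walk read on the copies; the
two copies of a vertex of `T(G) ∩ H(G)` are joined precisely when it lies on an anadiplosis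
semi-cycle, the two arcs being forced by the disjointness of tail and head.
-/

namespace DirHG

variable {V : Type} {N r s : ℕ} {G : DirHG V N r s}

/-- The tail copy (`b = true`) or head copy (`b = false`) of `u` in the bipartite split. -/
def copy (b : Bool) (u : V) : V ⊕ V := if b then .inl u else .inr u

def vertex : V ⊕ V → V := Sum.elim id id

@[simp] lemma vertex_copy (b : Bool) (u : V) : vertex (copy b u) = u := by
  cases b <;> rfl

@[simp] lemma isLeft_copy (b : Bool) (u : V) : (copy b u).isLeft = b := by
  cases b <;> rfl

@[simp] lemma copy_isLeft_vertex (a : V ⊕ V) : copy a.isLeft (vertex a) = a := by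
  cases a <;> rfl

lemma splitMem_copy {b : Bool} {u : V} {e : Fin N} :
    G.splitMem (copy b u) e ↔ u ∈ G.side b e := by
  cases b <;> rfl

lemma splitMem_iff_mem_side {a : V ⊕ V} {e : Fin N} :
    G.splitMem a e ↔ vertex a ∈ G.side a.isLeft e := by
  cases a <;> rfl

lemma exists_mem_side_iff {u : V} {e : Fin N} :
    (∃ b, u ∈ G.side b e) ↔ u ∈ G.tail e ∨ u ∈ G.head e := by
  simp [side, or_comm]

lemma disjoint_side {b b' : Bool} (hb : b ≠ b') (e : Fin N) :
    Disjoint (G.side b e) (G.side b' e) := by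
  cases b <;> cases b' <;> simp only [ne_eq, not_true_eq_false] at hb <;> simp only [side]
  exacts [(G.disj e).symm, G.disj e]

instance : Std.Symm G.tensorAdj where
  symm _ _ := fun ⟨e, i, hi, j, hj, h⟩ => ⟨e, i, hi, j, hj, h.symm.imp And.symm And.symm⟩

instance : Std.Symm G.splitAdj where
  symm _ _ := fun ⟨e, ha, hb⟩ => ⟨e, hb, ha⟩

lemma splitAdj_of_tensorAdj {a b : V ⊕ V} (h : G.tensorAdj a b) : G.splitAdj a b := by
  obtain ⟨e, i, hi, j, hj, ⟨rfl, rfl⟩ | ⟨rfl, rfl⟩⟩ := h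
  exacts [⟨e, hi, hj⟩, ⟨e, hj, hi⟩]

lemma reflTransGen_tensorAdj_inl_of_splitMem (hs : 0 < s) {a : V ⊕ V} {e : Fin N} {i : V}
    (hi : i ∈ G.tail e) (ha : G.splitMem a e) :
    Relation.ReflTransGen G.tensorAdj a (.inl i) := by
  obtain ⟨j, hj⟩ : (G.head e).Nonempty := Finset.card_pos.1 (hs.trans_eq (G.head_card e).symm)
  cases a with
  | inl i' =>
    exact .head ⟨e, i', ha, j, hj, .inl ⟨rfl, rfl⟩⟩ (.single ⟨e, i, hi, j, hj, .inr ⟨rfl, rfl⟩⟩)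
  | inr j' => exact .single ⟨e, i, hi, j', ha, .inr ⟨rfl, rfl⟩⟩

lemma reflTransGen_tensorAdj_of_splitAdj (hr : 0 < r) (hs : 0 < s) {a b : V ⊕ V}
    (h : G.splitAdj a b) : Relation.ReflTransGen G.tensorAdj a b := by
  obtain ⟨e, ha, hb⟩ := h
  obtain ⟨i, hi⟩ : (G.tail e).Nonempty := Finset.card_pos.1 (hr.trans_eq (G.tail_card e).symm)
  exact (reflTransGen_tensorAdj_inl_of_splitMem hs hi ha).trans
    (Std.Symm.symm _ _ (reflTransGen_tensorAdj_inl_of_splitMem hs hi hb))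

lemma reflTransGen_tensorAdj_eq (hr : 0 < r) (hs : 0 < s) :
    Relation.ReflTransGen G.tensorAdj = Relation.ReflTransGen G.splitAdj :=
  le_antisymm (Relation.ReflTransGen.mono fun _ _ => splitAdj_of_tensorAdj)
    (Relation.reflTransGen_closed fun _ _ => reflTransGen_tensorAdj_of_splitAdj hr hs)

lemma weaklyIrreducible_iff_splitConnected (hr : 0 < r) (hs : 0 < s) :
    G.WeaklyIrreducible ↔ G.SplitConnected := by
  rw [WeaklyIrreducible, SplitConnected, reflTransGen_tensorAdj_eq hr hs]

namespace AnaWalk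

variable {u v w : V} {bu bv bw : Bool} {L : List (Fin N)}

lemma reflTransGen_splitAdj (h : G.AnaWalk u bu w bw L) :
    Relation.ReflTransGen G.splitAdj (copy bu u) (copy bw w) := by
  induction h with
  | single e u w bu bw hu hw => exact .single ⟨e, splitMem_copy.2 hu, splitMem_copy.2 hw⟩
  | cons e u v w bu b bw L hu hv _ ih =>
    exact .head ⟨e, splitMem_copy.2 hu, splitMem_copy.2 hv⟩ ih

lemma concat (h : G.AnaWalk u bu v bv L) {e : Fin N} (hv : v ∈ G.side bv e)
    (hw : w ∈ G.side bw e) : G.AnaWalk u bu w bw (L ++ [e]) := by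
  induction h with
  | single e' u v bu bv hu hv' =>
    exact .cons e' u v w bu bv bw [e] hu hv' (.single e v w bv bw hv hw)
  | cons e' u x v bu b bv L hu hx _ ih => exact .cons e' u x w bu b bw (L ++ [e]) hu hx (ih hv)

lemma exists_mem_side_start (h : G.AnaWalk u bu w bw L) : ∃ e, u ∈ G.side bu e := by
  cases h with
  | single e _ _ _ _ hu => exact ⟨e, hu⟩
  | cons e _ _ _ _ _ _ _ hu => exact ⟨e, hu⟩

lemma exists_mem_side_end (h : G.AnaWalk u bu w bw L) : ∃ e, w ∈ G.side bw e := by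
  induction h with
  | single e _ _ _ _ _ hw => exact ⟨e, hw⟩
  | cons _ _ _ _ _ _ _ _ _ _ _ ih => exact ih

lemma ne_nil (h : G.AnaWalk u bu w bw L) : L ≠ [] := by
  cases h <;> simp

lemma exists_suffix_of_mem (h : G.AnaWalk v bv w bw L) {e : Fin N} (he : e ∈ L)
    (hu : u ∈ G.side bu e) : ∃ L', e :: L' <:+ L ∧ G.AnaWalk u bu w bw (e :: L') := by
  induction h with
  | single e' v w bv bw _ hw =>
    obtain rfl := List.mem_singleton.1 he
    exact ⟨[], List.suffix_refl _, .single e u w bu bw hu hw⟩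
  | cons e' v x w bv b bw L _ hx hL ih =>
    rcases List.mem_cons.1 he with rfl | he
    · exact ⟨L, List.suffix_refl _, .cons e u x w bu b bw L hu hx hL⟩
    · obtain ⟨L', hsuf, hwalk⟩ := ih he
      exact ⟨L', hsuf.trans (List.suffix_cons _ _), hwalk⟩

lemma exists_nodup (h : G.AnaWalk u bu w bw L) : ∃ L', L'.Nodup ∧ G.AnaWalk u bu w bw L' := by
  induction h with
  | single e u w bu bw hu hw => exact ⟨[e], List.nodup_singleton e, .single e u w bu bw hu hw⟩
  | cons e u v w bu b bw L hu hv _ ih =>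
    obtain ⟨L', hnd, hL'⟩ := ih
    by_cases he : e ∈ L'
    · obtain ⟨L'', hsuf, hwalk⟩ := hL'.exists_suffix_of_mem he hu
      exact ⟨e :: L'', hnd.sublist hsuf.sublist, hwalk⟩
    · exact ⟨e :: L', List.nodup_cons.2 ⟨he, hnd⟩, .cons e u v w bu b bw L' hu hv hL'⟩

lemma two_le_length_of_ne (h : G.AnaWalk u bu u bw L) (hb : bu ≠ bw) : 2 ≤ L.length := by
  cases h with
  | single e _ _ _ _ hu hw => exact absurd hw (Finset.disjoint_left.1 (disjoint_side hb e) hu)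
  | cons _ _ _ _ _ _ _ L _ _ hL => simpa [Nat.one_le_iff_ne_zero] using hL.ne_nil

end AnaWalk

lemma exists_anaWalk_of_reflTransGen {a b : V ⊕ V} (h : Relation.ReflTransGen G.splitAdj a b) :
    a = b ∨ ∃ L, G.AnaWalk (vertex a) a.isLeft (vertex b) b.isLeft L := by
  induction h with
  | refl => exact .inl rfl
  | tail _ hcd ih =>
    obtain ⟨e, hc, hd⟩ := hcd
    rw [splitMem_iff_mem_side] at hc hd
    rcases ih with rfl | ⟨L, hL⟩
    exacts [.inr ⟨_, .single e _ _ _ _ hc hd⟩, .inr ⟨L ++ [e], hL.concat hc hd⟩]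

lemma SplitConnected.anaConnected (hG : G.SplitConnected) : G.AnaConnected := by
  constructor
  · rintro u v huv hu hv
    obtain ⟨eu, bu, hu⟩ := hu.imp fun _ => exists_mem_side_iff.2
    obtain ⟨ev, bv, hv⟩ := hv.imp fun _ => exists_mem_side_iff.2
    rcases exists_anaWalk_of_reflTransGen (hG (copy bu u) (copy bv v)
      ⟨eu, splitMem_copy.2 hu⟩ ⟨ev, splitMem_copy.2 hv⟩) with heq | ⟨L, hL⟩
    · exact absurd (by simpa using congrArg vertex heq) huv
    · exact ⟨bu, bv, L, by simpa using hL⟩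
  · rintro u ⟨e, he⟩ ⟨f, hf⟩
    rcases exists_anaWalk_of_reflTransGen (hG (.inl u) (.inr u) ⟨e, he⟩ ⟨f, hf⟩)
      with heq | ⟨L, hL⟩
    · exact absurd heq Sum.inl_ne_inr
    · replace hL : G.AnaWalk u true u false L := hL
      obtain ⟨L', hnd, hL'⟩ := hL.exists_nodup
      exact ⟨L', hnd, hL'.two_le_length_of_ne (by decide), .inl hL'⟩

lemma AnaConnected.reflTransGen_copy_copy (hG : G.AnaConnected) {u : V} {b b' : Bool}
    {e e' : Fin N} (hu : u ∈ G.side b e) (hu' : u ∈ G.side b' e') :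
    Relation.ReflTransGen G.splitAdj (copy b u) (copy b' u) := by
  have hcross : ∀ et eh, u ∈ G.tail et → u ∈ G.head eh →
      Relation.ReflTransGen G.splitAdj (copy true u) (copy false u) := by
    intro et eh ht hh
    obtain ⟨L, -, -, hL | hL⟩ := hG.2 u ⟨et, ht⟩ ⟨eh, hh⟩
    exacts [hL.reflTransGen_splitAdj, Std.Symm.symm _ _ hL.reflTransGen_splitAdj]
  cases b <;> cases b'
  · exact .refl
  · exact Std.Symm.symm _ _ (hcross e' e hu' hu)
  · exact hcross e e' hu hu'
  · exact .refl

lemma AnaConnected.splitConnected (hG : G.AnaConnected) : G.SplitConnected := by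
  intro a b ⟨ea, ha⟩ ⟨eb, hb⟩
  rw [← copy_isLeft_vertex a, ← copy_isLeft_vertex b]
  rw [splitMem_iff_mem_side] at ha hb
  by_cases hab : vertex a = vertex b
  · rw [← hab] at hb ⊢
    exact hG.reflTransGen_copy_copy ha hb
  obtain ⟨bu, bv, L, hL⟩ := hG.1 _ _ hab
    ⟨ea, exists_mem_side_iff.1 ⟨_, ha⟩⟩ ⟨eb, exists_mem_side_iff.1 ⟨_, hb⟩⟩
  obtain ⟨e₁, h₁⟩ := hL.exists_mem_side_start
  obtain ⟨e₂, h₂⟩ := hL.exists_mem_side_end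
  exact ((hG.reflTransGen_copy_copy ha h₁).trans hL.reflTransGen_splitAdj).trans
    (hG.reflTransGen_copy_copy h₂ hb)

lemma splitConnected_iff_anaConnected : G.SplitConnected ↔ G.AnaConnected :=
  ⟨SplitConnected.anaConnected, AnaConnected.splitConnected⟩

end DirHG

/-- The adjacency tensor of an `(r,s)`-directed hypergraph `G` is weakly
irreducible if and only if `G` is anadiplosis connected. -/
theorem weaklyIrreducible_iff_anaConnected (V : Type) (N r s : ℕ)
    (hr : 0 < r) (hs : 0 < s) (G : DirHG V N r s) :
    G.WeaklyIrreducible ↔ G.AnaConnected :=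
  (DirHG.weaklyIrreducible_iff_splitConnected hr hs).trans DirHG.splitConnected_iff_anaConnected
end

section
/- Let G be an (r,s)-directed hypergraph with anadiplosis components G₁,...,G_k, and suppose r/p + s/q < 1. Then λ_{p,q}(G) = ( ∑_{i=1}^k λ_{p,q}(G_i)^{1/(1−(r/p+s/q))} )^{1−(r/p+s/q)}. -/
/-- An `(r,s)`-directed hypergraph with tail vertices `Fin m`, head vertices
`Fin n`, and arcs indexed by a type `E`. -/
structure DirHypergraph (m n : ℕ) (E : Type) (r s : ℕ) where
  tail : E → Finset (Fin m)
  head : E → Finset (Fin n)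
  tail_card : ∀ e, (tail e).card = r
  head_card : ∀ e, (head e).card = s

namespace DirHypergraph

noncomputable def pnorm {k : ℕ} (p : ℝ) (x : Fin k → ℝ) : ℝ :=
  (∑ i, |x i| ^ p) ^ (1 / p)

variable {m n r s : ℕ} {E : Type} [Fintype E]

noncomputable def polyForm (G : DirHypergraph m n E r s)
    (x : Fin m → ℝ) (y : Fin n → ℝ) : ℝ :=
  ∑ e, (∏ u ∈ G.tail e, x u) * ∏ v ∈ G.head e, y v

noncomputable def specRad (G : DirHypergraph m n E r s) (p q : ℝ) : ℝ :=
  sSup {z | ∃ x y, pnorm p x = 1 ∧ pnorm q y = 1 ∧ z = G.polyForm x y}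

/-- Membership of a vertex (tail copy `Sum.inl` / head copy `Sum.inr`) in an arc. -/
def memArc (G : DirHypergraph m n E r s) : (Fin m ⊕ Fin n) → E → Prop
  | Sum.inl u, e => u ∈ G.tail e
  | Sum.inr v, e => v ∈ G.head e

/-- Two vertices are adjacent when some arc contains both. -/
def adj (G : DirHypergraph m n E r s) (a b : Fin m ⊕ Fin n) : Prop :=
  ∃ e, G.memArc a e ∧ G.memArc b e

/-- Anadiplosis connectedness, expressed as connectedness of the underlying
hypergraph of the bipartite split. -/
def Connected (G : DirHypergraph m n E r s) : Prop :=
  ∀ a b, (∃ e, G.memArc a e) → (∃ e, G.memArc b e) →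
    Relation.ReflTransGen G.adj a b

/-- The subhypergraph formed by the arcs in class `i` of the partition `c`. -/
def restrict {N k : ℕ} (G : DirHypergraph m n (Fin N) r s)
    (c : Fin N → Fin k) (i : Fin k) :
    DirHypergraph m n {e : Fin N // c e = i} r s where
  tail e := G.tail e.1
  head e := G.head e.1
  tail_card e := G.tail_card e.1
  head_card e := G.head_card e.1

end DirHypergraph

/-!
Splitting the arcs by component splits the form, `P(x, y) = ∑ᵢ Pᵢ(x, y)`, and the components
have disjoint vertex sets `Tᵢ`, `Hᵢ`. By homogeneity `Pᵢ(x, y) ≤ λᵢ Bᵢ^(r/p) Cᵢ^(s/q)` with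
`Bᵢ = ∑_{u ∈ Tᵢ} |xᵤ|^p` and `Cᵢ = ∑_{v ∈ Hᵢ} |yᵥ|^q`; since `∑ Bᵢ, ∑ Cᵢ ≤ 1`, Hölder's inequality
bounds `∑ᵢ λᵢ Bᵢ^(r/p) Cᵢ^(s/q)` by the right-hand side. Conversely, gluing optimal vectors of
the components, scaled by `wᵢ^(1/p)` and `wᵢ^(1/q)` with `wᵢ ∝ λᵢ^(1/(1 - (r/p + s/q)))`, gives
vectors of norm at most one on which `P` equals the right-hand side.
-/

namespace DirHypergraph

open Finset Function Real

section pnorm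

variable {k : ℕ} {p : ℝ}

theorem pnorm_eq_norm_toLp (hp : 0 < p) (x : Fin k → ℝ) :
    pnorm p x = ‖WithLp.toLp (ENNReal.ofReal p) x‖ := by
  rw [PiLp.norm_eq_sum (by rwa [ENNReal.toReal_ofReal hp.le])]
  simp [pnorm, ENNReal.toReal_ofReal hp.le]

theorem pnorm_nonneg {x : Fin k → ℝ} : 0 ≤ pnorm p x :=
  rpow_nonneg (by positivity) _

theorem pnorm_rpow (hp : 0 < p) (x : Fin k → ℝ) : pnorm p x ^ p = ∑ i, |x i| ^ p := by
  rw [pnorm, one_div, rpow_inv_rpow (by positivity) hp.ne']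

theorem pnorm_pow (x : Fin k → ℝ) (r : ℕ) :
    pnorm p x ^ r = (∑ i, |x i| ^ p) ^ ((r : ℝ) / p) := by
  rw [pnorm, ← rpow_natCast, ← rpow_mul (by positivity), one_div_mul_eq_div]

theorem pnorm_ite_mem_pow (hp : 0 < p) (S : Finset (Fin k)) (x : Fin k → ℝ) (r : ℕ) :
    pnorm p (fun i => if i ∈ S then x i else 0) ^ r =
      (∑ i ∈ S, |x i| ^ p) ^ ((r : ℝ) / p) := by
  simp [pnorm_pow, apply_ite, zero_rpow hp.ne', sum_ite_mem]

theorem pnorm_le_one (hp : 0 < p) {x : Fin k → ℝ} (hx : ∑ i, |x i| ^ p ≤ 1) :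
    pnorm p x ≤ 1 :=
  rpow_le_one (by positivity) hx (by positivity)

theorem pnorm_single (hp : 0 < p) (i : Fin k) : pnorm p (Pi.single i 1) = 1 := by
  simp [pnorm, Pi.single_apply, apply_ite, zero_rpow hp.ne']

theorem pnorm_smul (hp : 1 ≤ p) (a : ℝ) (x : Fin k → ℝ) :
    pnorm p (a • x) = |a| * pnorm p x := by
  have : Fact (1 ≤ ENNReal.ofReal p) := ⟨by simpa using hp⟩
  have hp0 : 0 < p := by linarith
  rw [pnorm_eq_norm_toLp hp0, pnorm_eq_norm_toLp hp0, WithLp.toLp_smul, norm_smul, norm_eq_abs]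

theorem isCompact_setOf_pnorm_eq_one (hp : 1 ≤ p) :
    IsCompact {x : Fin k → ℝ | pnorm p x = 1} := by
  have : Fact (1 ≤ ENNReal.ofReal p) := ⟨by simpa using hp⟩
  have hsphere : {x : Fin k → ℝ | pnorm p x = 1} =
      WithLp.ofLp '' Metric.sphere (0 : PiLp (ENNReal.ofReal p) fun _ : Fin k => ℝ) 1 := by
    ext x
    simp only [Set.mem_ofPred_eq, pnorm_eq_norm_toLp (by linarith : 0 < p), Set.mem_image,
      mem_sphere_zero_iff_norm]
    exact ⟨fun h => ⟨_, h, rfl⟩, by rintro ⟨y, hy, rfl⟩; exact hy⟩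
  rw [hsphere]
  exact (isCompact_sphere _ _).image (PiLp.continuous_ofLp _ _)

theorem exists_pnorm_eq_one_smul (hk : 0 < k) (hp : 1 ≤ p) (x : Fin k → ℝ) :
    ∃ x', pnorm p x' = 1 ∧ pnorm p x • x' = x := by
  have hp0 : 0 < p := by linarith
  by_cases h : pnorm p x = 0
  · refine ⟨Pi.single ⟨0, hk⟩ 1, pnorm_single hp0 _, ?_⟩
    have : Fact (1 ≤ ENNReal.ofReal p) := ⟨by simpa using hp⟩
    have hx : WithLp.toLp (ENNReal.ofReal p) x = 0 :=
      norm_eq_zero.1 (pnorm_eq_norm_toLp hp0 x ▸ h)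
    rw [h, zero_smul, ← (WithLp.toLp_eq_zero _).1 hx]
  · refine ⟨(pnorm p x)⁻¹ • x, ?_, smul_inv_smul₀ h x⟩
    rw [pnorm_smul hp, abs_inv, abs_of_nonneg pnorm_nonneg, inv_mul_cancel₀ h]

end pnorm

section polyForm

variable {m n r s : ℕ} {E : Type} [Fintype E] (G : DirHypergraph m n E r s) {p q : ℝ}

theorem polyForm_smul (a b : ℝ) (x : Fin m → ℝ) (y : Fin n → ℝ) :
    G.polyForm (a • x) (b • y) = a ^ r * b ^ s * G.polyForm x y := by
  simp only [polyForm, mul_sum, Pi.smul_apply, smul_eq_mul, prod_mul_distrib, prod_const,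
    G.tail_card, G.head_card]
  exact sum_congr rfl fun _ _ => by ring

theorem polyForm_nonneg {x : Fin m → ℝ} {y : Fin n → ℝ} (hx : 0 ≤ x) (hy : 0 ≤ y) :
    0 ≤ G.polyForm x y :=
  sum_nonneg fun _ _ => mul_nonneg (prod_nonneg fun u _ => hx u) (prod_nonneg fun v _ => hy v)

theorem isCompact_polyForm_image (hp : 1 ≤ p) (hq : 1 ≤ q) :
    IsCompact {z | ∃ x y, pnorm p x = 1 ∧ pnorm q y = 1 ∧ z = G.polyForm x y} := by
  have himage : {z | ∃ x y, pnorm p x = 1 ∧ pnorm q y = 1 ∧ z = G.polyForm x y} =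
      (fun xy => G.polyForm xy.1 xy.2) '' ({x | pnorm p x = 1} ×ˢ {y | pnorm q y = 1}) := by
    ext z
    simp [eq_comm]
  rw [himage]
  exact ((isCompact_setOf_pnorm_eq_one hp).prod (isCompact_setOf_pnorm_eq_one hq)).image
    (by unfold polyForm; fun_prop)

theorem polyForm_le_specRad (hp : 1 ≤ p) (hq : 1 ≤ q) {x : Fin m → ℝ} {y : Fin n → ℝ}
    (hx : pnorm p x = 1) (hy : pnorm q y = 1) : G.polyForm x y ≤ G.specRad p q :=
  le_csSup (G.isCompact_polyForm_image hp hq).bddAbove ⟨x, y, hx, hy, rfl⟩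

theorem exists_polyForm_eq_specRad (hm : 0 < m) (hn : 0 < n) (hp : 1 ≤ p) (hq : 1 ≤ q) :
    ∃ x y, pnorm p x = 1 ∧ pnorm q y = 1 ∧ G.polyForm x y = G.specRad p q := by
  obtain ⟨x, y, hx, hy, h⟩ := (G.isCompact_polyForm_image hp hq).sSup_mem
    ⟨_, _, _, pnorm_single (by linarith) ⟨0, hm⟩, pnorm_single (by linarith) ⟨0, hn⟩, rfl⟩
  exact ⟨x, y, hx, hy, h.symm⟩

theorem specRad_nonneg (hm : 0 < m) (hn : 0 < n) (hp : 1 ≤ p) (hq : 1 ≤ q) :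
    0 ≤ G.specRad p q :=
  (G.polyForm_nonneg (Pi.single_nonneg.2 zero_le_one) (Pi.single_nonneg.2 zero_le_one)).trans
    (G.polyForm_le_specRad hp hq (pnorm_single (by linarith) ⟨0, hm⟩)
      (pnorm_single (by linarith) ⟨0, hn⟩))

theorem polyForm_le_specRad_mul (hm : 0 < m) (hn : 0 < n) (hp : 1 ≤ p) (hq : 1 ≤ q)
    (x : Fin m → ℝ) (y : Fin n → ℝ) :
    G.polyForm x y ≤ G.specRad p q * pnorm p x ^ r * pnorm q y ^ s := by
  obtain ⟨x', hx', hx⟩ := exists_pnorm_eq_one_smul hm hp x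
  obtain ⟨y', hy', hy⟩ := exists_pnorm_eq_one_smul hn hq y
  calc G.polyForm x y = pnorm p x ^ r * pnorm q y ^ s * G.polyForm x' y' := by
        rw [← G.polyForm_smul, hx, hy]
    _ ≤ pnorm p x ^ r * pnorm q y ^ s * G.specRad p q := by
        gcongr
        · exact mul_nonneg (pow_nonneg pnorm_nonneg _) (pow_nonneg pnorm_nonneg _)
        · exact G.polyForm_le_specRad hp hq hx' hy'
    _ = G.specRad p q * pnorm p x ^ r * pnorm q y ^ s := by ring

def tailSet : Finset (Fin m) := univ.biUnion G.tail

def headSet : Finset (Fin n) := univ.biUnion G.head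

theorem polyForm_congr {x x' : Fin m → ℝ} {y y' : Fin n → ℝ}
    (hx : ∀ u ∈ G.tailSet, x u = x' u) (hy : ∀ v ∈ G.headSet, y v = y' v) :
    G.polyForm x y = G.polyForm x' y' :=
  sum_congr rfl fun e _ => by
    rw [prod_congr rfl fun u hu => hx u (mem_biUnion.2 ⟨e, mem_univ _, hu⟩),
      prod_congr rfl fun v hv => hy v (mem_biUnion.2 ⟨e, mem_univ _, hv⟩)]

theorem polyForm_le_specRad_mul_sum (hm : 0 < m) (hn : 0 < n) (hp : 1 ≤ p) (hq : 1 ≤ q)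
    (x : Fin m → ℝ) (y : Fin n → ℝ) :
    G.polyForm x y ≤ G.specRad p q * (∑ u ∈ G.tailSet, |x u| ^ p) ^ ((r : ℝ) / p) *
      (∑ v ∈ G.headSet, |y v| ^ q) ^ ((s : ℝ) / q) := by
  calc G.polyForm x y = G.polyForm (fun u => if u ∈ G.tailSet then x u else 0)
        (fun v => if v ∈ G.headSet then y v else 0) :=
        G.polyForm_congr (fun u hu => (if_pos hu).symm) fun v hv => (if_pos hv).symm
    _ ≤ _ := G.polyForm_le_specRad_mul hm hn hp hq _ _
    _ = _ := by rw [pnorm_ite_mem_pow (by linarith), pnorm_ite_mem_pow (by linarith)]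

end polyForm

section gluing

variable {ι : Type*} [Fintype ι] {k : ℕ} {T : ι → Finset (Fin k)}

theorem sum_sum_le_sum_of_pairwise_disjoint (hT : Pairwise (Disjoint on T)) {f : Fin k → ℝ}
    (hf : 0 ≤ f) : ∑ i, ∑ u ∈ T i, f u ≤ ∑ u, f u := by
  rw [← sum_biUnion (hT.set_pairwise _)]
  exact sum_le_univ_sum_of_nonneg hf

variable (T) in
def glue (x : ι → Fin k → ℝ) (u : Fin k) : ℝ :=
  ∑ i, if u ∈ T i then x i u else 0

theorem glue_apply_of_mem (hT : Pairwise (Disjoint on T)) (x : ι → Fin k → ℝ) {i : ι}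
    {u : Fin k} (hu : u ∈ T i) : glue T x u = x i u := by
  rw [glue, sum_eq_single i (fun j _ hji => if_neg (disjoint_left.1 (hT hji.symm) hu))
    (by simp), if_pos hu]

theorem sum_abs_glue_rpow_le {p : ℝ} (hp : 0 < p) (hT : Pairwise (Disjoint on T))
    (x : ι → Fin k → ℝ) : ∑ u, |glue T x u| ^ p ≤ ∑ i, ∑ u, |x i u| ^ p := by
  have hout : ∀ u ∉ univ.biUnion T, |glue T x u| ^ p = 0 := by
    intro u hu
    simp only [mem_biUnion, mem_univ, true_and, not_exists] at hu
    simp [glue, hu, zero_rpow hp.ne']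
  calc ∑ u, |glue T x u| ^ p = ∑ u ∈ univ.biUnion T, |glue T x u| ^ p :=
        (sum_subset (subset_univ _) fun u _ hu => hout u hu).symm
    _ = ∑ i, ∑ u ∈ T i, |x i u| ^ p := by
        rw [sum_biUnion (hT.set_pairwise _)]
        exact sum_congr rfl fun i _ =>
          sum_congr rfl fun u hu => by rw [glue_apply_of_mem hT x hu]
    _ ≤ ∑ i, ∑ u, |x i u| ^ p :=
        sum_le_sum fun i _ => sum_le_univ_sum_of_nonneg fun u => by positivity

theorem pnorm_glue_le_one {p : ℝ} (hp : 1 ≤ p) (hT : Pairwise (Disjoint on T))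
    {x : ι → Fin k → ℝ} (hx : ∀ i, pnorm p (x i) = 1) {w : ι → ℝ} (hw : 0 ≤ w)
    (hw1 : ∑ i, w i ≤ 1) : pnorm p (glue T fun i => w i ^ (1 / p) • x i) ≤ 1 := by
  have hp0 : 0 < p := by linarith
  refine pnorm_le_one hp0 ((sum_abs_glue_rpow_le hp0 hT _).trans (le_of_eq_of_le ?_ hw1))
  refine sum_congr rfl fun i _ => ?_
  rw [← pnorm_rpow hp0, pnorm_smul hp, hx, mul_one, abs_of_nonneg (rpow_nonneg (hw i) _),
    ← rpow_mul (hw i), one_div_mul_cancel hp0.ne', rpow_one]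

end gluing

section restrict

variable {m n r s N k : ℕ} (G : DirHypergraph m n (Fin N) r s) (c : Fin N → Fin k)

theorem polyForm_eq_sum_restrict (x : Fin m → ℝ) (y : Fin n → ℝ) :
    G.polyForm x y = ∑ i, (G.restrict c i).polyForm x y := by
  rw [polyForm, ← sum_fiberwise univ c]
  exact sum_congr rfl fun i _ => sum_subtype _ (by simp) _

theorem pairwise_disjoint_tailSet_restrict
    (hsep : ∀ e f, (∃ a, G.memArc a e ∧ G.memArc a f) → c e = c f) :
    Pairwise (Disjoint on fun i => (G.restrict c i).tailSet) := by
  rintro i j hij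
  refine disjoint_left.2 fun u hui huj => hij ?_
  obtain ⟨⟨e, rfl⟩, -, hue⟩ := mem_biUnion.1 hui
  obtain ⟨⟨f, rfl⟩, -, huf⟩ := mem_biUnion.1 huj
  exact hsep e f ⟨Sum.inl u, hue, huf⟩

theorem pairwise_disjoint_headSet_restrict
    (hsep : ∀ e f, (∃ a, G.memArc a e ∧ G.memArc a f) → c e = c f) :
    Pairwise (Disjoint on fun i => (G.restrict c i).headSet) := by
  rintro i j hij
  refine disjoint_left.2 fun v hvi hvj => hij ?_
  obtain ⟨⟨e, rfl⟩, -, hve⟩ := mem_biUnion.1 hvi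
  obtain ⟨⟨f, rfl⟩, -, hvf⟩ := mem_biUnion.1 hvj
  exact hsep e f ⟨Sum.inr v, hve, hvf⟩

end restrict

section weights

variable {ι : Type*} [Fintype ι]

theorem rpow_mul_rpow_one_div_div_rpow {x W β : ℝ} (hx : 0 ≤ x) (hW : 0 < W) (hβ : β ≠ 0) :
    W ^ β * (x ^ (1 / β) / W) ^ β = x := by
  rw [div_rpow (by positivity) hW.le, ← rpow_mul hx, one_div_mul_cancel hβ, rpow_one,
    mul_div_cancel₀ _ (rpow_pos_of_pos hW β).ne']

theorem sum_rpow_mul_rpow_mul_rpow_le_one {f g h : ι → ℝ} (hf : 0 ≤ f) (hg : 0 ≤ g)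
    (hh : 0 ≤ h) (hf1 : ∑ i, f i ≤ 1) (hg1 : ∑ i, g i ≤ 1) (hh1 : ∑ i, h i ≤ 1) {α β γ : ℝ}
    (hα : 0 ≤ α) (hβ : 0 ≤ β) (hγ : 0 ≤ γ) (hαβγ : α + β + γ = 1) :
    ∑ i, f i ^ α * g i ^ β * h i ^ γ ≤ 1 :=
  calc ∑ i, f i ^ α * g i ^ β * h i ^ γ ≤ ∑ i, (α * f i + β * g i + γ * h i) :=
        sum_le_sum fun i _ =>
          geom_mean_le_arith_mean3_weighted hα hβ hγ (hf i) (hg i) (hh i) hαβγ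
    _ = α * ∑ i, f i + β * ∑ i, g i + γ * ∑ i, h i := by
        simp only [sum_add_distrib, mul_sum]
    _ ≤ α + β + γ := by gcongr <;> exact mul_le_of_le_one_right ‹_› ‹_›
    _ = 1 := hαβγ

-- Hölder's inequality with exponents `1 / (1 - (a + b))`, `1 / a`, `1 / b`, for `∑ B, ∑ C ≤ 1`.
theorem sum_mul_rpow_mul_rpow_le {lam B C : ι → ℝ} (hlam : 0 ≤ lam) (hB : 0 ≤ B) (hC : 0 ≤ C)
    (hB1 : ∑ i, B i ≤ 1) (hC1 : ∑ i, C i ≤ 1) {a b : ℝ} (ha : 0 ≤ a) (hb : 0 ≤ b)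
    (hab : a + b < 1) :
    ∑ i, lam i * B i ^ a * C i ^ b ≤
      (∑ i, lam i ^ (1 / (1 - (a + b)))) ^ (1 - (a + b)) := by
  set β := 1 - (a + b)
  have hβ : 0 < β := by linarith
  set W := ∑ i, lam i ^ (1 / β)
  rcases (sum_nonneg fun i _ => rpow_nonneg (hlam i) _ : 0 ≤ W).eq_or_lt with hW | hW
  · have hlam0 : ∀ i, lam i = 0 := fun i =>
      (rpow_eq_zero (hlam i) (by positivity)).1
        ((sum_eq_zero_iff_of_nonneg fun i _ => rpow_nonneg (hlam i) _).1 hW.symm i (mem_univ i))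
    simp only [hlam0, zero_mul, sum_const_zero]
    exact rpow_nonneg hW.le _
  set w := fun i => lam i ^ (1 / β) / W
  have hw1 : ∑ i, w i = 1 := by rw [← sum_div, div_self hW.ne']
  calc ∑ i, lam i * B i ^ a * C i ^ b = W ^ β * ∑ i, w i ^ β * B i ^ a * C i ^ b := by
        rw [mul_sum]
        refine sum_congr rfl fun i _ => ?_
        rw [← rpow_mul_rpow_one_div_div_rpow (hlam i) hW hβ.ne']
        ring
    _ ≤ W ^ β * 1 := by
        gcongr
        exact sum_rpow_mul_rpow_mul_rpow_le_one (fun i => div_nonneg (rpow_nonneg (hlam i) _) hW.le)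
          hB hC hw1.le hB1 hC1 hβ.le ha hb (by ring)
    _ = W ^ β := mul_one _

end weights

section spectralRadius

variable {m n r s N k : ℕ} (G : DirHypergraph m n (Fin N) r s) {c : Fin N → Fin k} {p q : ℝ}

theorem specRad_le_sum_specRad_restrict (hm : 0 < m) (hn : 0 < n) (hp : 1 ≤ p) (hq : 1 ≤ q)
    (he : (r : ℝ) / p + (s : ℝ) / q < 1)
    (hT : Pairwise (Disjoint on fun i => (G.restrict c i).tailSet))
    (hH : Pairwise (Disjoint on fun i => (G.restrict c i).headSet)) :
    G.specRad p q ≤ (∑ i, (G.restrict c i).specRad p q ^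
      (1 / (1 - ((r : ℝ) / p + (s : ℝ) / q)))) ^ (1 - ((r : ℝ) / p + (s : ℝ) / q)) := by
  have hlam : ∀ i, 0 ≤ (G.restrict c i).specRad p q := fun i =>
    (G.restrict c i).specRad_nonneg hm hn hp hq
  refine Real.sSup_le ?_ (rpow_nonneg (sum_nonneg fun i _ => rpow_nonneg (hlam i) _) _)
  rintro _ ⟨x, y, hx, hy, rfl⟩
  have hx1 : ∑ u, |x u| ^ p = 1 := by rw [← pnorm_rpow (by linarith), hx, one_rpow]
  have hy1 : ∑ v, |y v| ^ q = 1 := by rw [← pnorm_rpow (by linarith), hy, one_rpow]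
  rw [G.polyForm_eq_sum_restrict c]
  refine (sum_le_sum fun i _ =>
    (G.restrict c i).polyForm_le_specRad_mul_sum hm hn hp hq x y).trans
      (sum_mul_rpow_mul_rpow_le hlam (fun i => by positivity) (fun i => by positivity) ?_ ?_
        (by positivity) (by positivity) he)
  · exact hx1 ▸ sum_sum_le_sum_of_pairwise_disjoint hT fun u => by positivity
  · exact hy1 ▸ sum_sum_le_sum_of_pairwise_disjoint hH fun v => by positivity

theorem sum_specRad_restrict_le_specRad (hm : 0 < m) (hn : 0 < n) (hp : 1 ≤ p) (hq : 1 ≤ q)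
    (he : (r : ℝ) / p + (s : ℝ) / q < 1)
    (hT : Pairwise (Disjoint on fun i => (G.restrict c i).tailSet))
    (hH : Pairwise (Disjoint on fun i => (G.restrict c i).headSet)) :
    (∑ i, (G.restrict c i).specRad p q ^ (1 / (1 - ((r : ℝ) / p + (s : ℝ) / q)))) ^
      (1 - ((r : ℝ) / p + (s : ℝ) / q)) ≤ G.specRad p q := by
  set β := 1 - ((r : ℝ) / p + (s : ℝ) / q) with hβdef
  have hβ : 0 < β := by linarith
  set lam := fun i => (G.restrict c i).specRad p q
  have hlam : ∀ i, 0 ≤ lam i := fun i => (G.restrict c i).specRad_nonneg hm hn hp hq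
  set W := ∑ i, lam i ^ (1 / β)
  rcases (sum_nonneg fun i _ => rpow_nonneg (hlam i) _ : 0 ≤ W).eq_or_lt with hW | hW
  · rw [show W = 0 from hW.symm, zero_rpow hβ.ne']
    exact G.specRad_nonneg hm hn hp hq
  choose x y hx hy hxy using fun i => (G.restrict c i).exists_polyForm_eq_specRad hm hn hp hq
  -- The proportions from the equality case of Hölder's inequality.
  set w := fun i => lam i ^ (1 / β) / W
  have hw : 0 ≤ w := fun i => div_nonneg (rpow_nonneg (hlam i) _) hW.le
  have hw1 : ∑ i, w i = 1 := by rw [← sum_div, div_self hW.ne']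
  set X := glue (fun i => (G.restrict c i).tailSet) fun i => w i ^ (1 / p) • x i
  set Y := glue (fun i => (G.restrict c i).headSet) fun i => w i ^ (1 / q) • y i
  have hlam_eq : ∀ i, (G.restrict c i).specRad p q = W ^ β * w i ^ β := fun i =>
    (rpow_mul_rpow_one_div_div_rpow (hlam i) hW hβ.ne').symm
  have hcomp : ∀ i, (G.restrict c i).polyForm X Y = W ^ β * w i := by
    intro i
    have hp0 : 0 < p := by linarith
    have hq0 : 0 < q := by linarith
    rw [(G.restrict c i).polyForm_congr (fun u hu => glue_apply_of_mem hT _ hu)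
      (fun v hv => glue_apply_of_mem hH _ hv), polyForm_smul, hxy, ← rpow_natCast,
      ← rpow_natCast, ← rpow_mul (hw i), ← rpow_mul (hw i), hlam_eq i, mul_left_comm,
      ← rpow_add_of_nonneg (hw i) (by positivity) (by positivity),
      ← rpow_add_of_nonneg (hw i) (by positivity) hβ.le, hβdef,
      show 1 / p * r + 1 / q * s + (1 - (r / p + s / q)) = 1 by ring, rpow_one]
  calc W ^ β = ∑ i, (G.restrict c i).polyForm X Y := by
        simp only [hcomp, ← mul_sum, hw1, mul_one]
    _ = G.polyForm X Y := (G.polyForm_eq_sum_restrict c X Y).symm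
    _ ≤ G.specRad p q * pnorm p X ^ r * pnorm q Y ^ s :=
        G.polyForm_le_specRad_mul hm hn hp hq X Y
    _ ≤ G.specRad p q := by
        have hX := pnorm_glue_le_one hp hT hx hw hw1.le
        have hY := pnorm_glue_le_one hq hH hy hw hw1.le
        rw [mul_assoc]
        exact mul_le_of_le_one_right (G.specRad_nonneg hm hn hp hq)
          (mul_le_one₀ (pow_le_one₀ pnorm_nonneg hX) (pow_nonneg pnorm_nonneg _)
            (pow_le_one₀ pnorm_nonneg hY))

end spectralRadius

end DirHypergraph

theorem specRad_eq_sum_components_general (m n N k r s : ℕ) (hm : 0 < m) (hn : 0 < n)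
    (G : DirHypergraph m n (Fin N) r s)
    (p q : ℝ) (hp : 1 ≤ p) (hq : 1 ≤ q)
    (he : (r : ℝ) / p + (s : ℝ) / q < 1)
    (c : Fin N → Fin k)
    (hsep : ∀ e f, (∃ a, G.memArc a e ∧ G.memArc a f) → c e = c f) :
    G.specRad p q =
      (∑ i : Fin k, ((G.restrict c i).specRad p q) ^
          (1 / (1 - ((r : ℝ) / p + (s : ℝ) / q)))) ^
        (1 - ((r : ℝ) / p + (s : ℝ) / q)) := by
  have hT := G.pairwise_disjoint_tailSet_restrict c hsep
  have hH := G.pairwise_disjoint_headSet_restrict c hsep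
  exact le_antisymm (G.specRad_le_sum_specRad_restrict hm hn hp hq he hT hH)
    (G.sum_specRad_restrict_le_specRad hm hn hp hq he hT hH)

/-- If `r/p + s/q < 1`, the `(p,q)`-spectral radius of an `(r,s)`-directed
hypergraph is obtained from those of its anadiplosis components by
`λ_{p,q}(G) = (∑ᵢ λ_{p,q}(Gᵢ)^{1/(1−(r/p+s/q))})^{1−(r/p+s/q)}`. -/
theorem specRad_eq_sum_components (m n N k r s : ℕ) (hm : 0 < m) (hn : 0 < n)
    (G : DirHypergraph m n (Fin N) r s)
    (p q : ℝ) (hp : 1 ≤ p) (hq : 1 ≤ q)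
    (he : (r : ℝ) / p + (s : ℝ) / q < 1)
    (c : Fin N → Fin k)
    (hcover : ∀ i, ∃ e, c e = i)
    (hsep : ∀ e f, (∃ a, G.memArc a e ∧ G.memArc a f) → c e = c f)
    (hconn : ∀ i, (G.restrict c i).Connected) :
    G.specRad p q =
      (∑ i : Fin k, ((G.restrict c i).specRad p q) ^
          (1 / (1 - ((r : ℝ) / p + (s : ℝ) / q)))) ^
        (1 - ((r : ℝ) / p + (s : ℝ) / q)) :=
  specRad_eq_sum_components_general m n N k r s hm hn G p q hp hq he c hsep
end
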